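/- arXiv:1803.01819 — 4 statements merged into one kernel-verified Lean document; each statement's English description precedes it below -/
import Mathlib

section
/- Let τ > 0, let T_p ∈ [0, τ], and let h : ℝ → ℂ be integrable with h(t) = 0 for all t ∉ [0, T_p]. Let L ∈ ℕ, and for each l < L let α_l ∈ ℂ, ν_l ∈ ℝ, and τ_l ∈ [0, τ − T_p]. Fix p ∈ ℕ and define the aligned frame r_p : ℝ → ℂ by r_p(t) = Σ_{l<L} α_l · h(t − τ_l) · exp(−i ν_l p τ). Then for every integer k, ∫_{0}^{τ} r_p(t) · exp(−2πi k t / τ) dt = Ĥ(k/τ) · Σ_{l<L} α_l · exp(−2πi k τ_l / τ) · exp(−i ν_l p τ), where Ĥ(f) = ∫_ℝ h(t) · exp(−2πi f t) dt is the continuous-time Fourier transform of h. -/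
/-!
Each echo `h (· - τ_l)` vanishes outside `[0, τ]`, so its integral over `[0, τ]` against
`exp (z t)` is the integral over the whole line, and the substitution `t ↦ t + τ_l` turns it into
the transform of `h` times the phase `exp (z τ_l)`. The formula follows by linearity over the
finitely many echoes.
-/

open MeasureTheory Complex Real

theorem intervalIntegral.integral_eq_integral_of_support_subset_Icc
    {E : Type*} [NormedAddCommGroup E] [NormedSpace ℝ E] {f : ℝ → E} {a b : ℝ}
    (hf : Function.support f ⊆ Set.Icc a b) : ∫ t in a..b, f t = ∫ t, f t := by
  have vanishes_off {s : Set ℝ} (hs : Disjoint s (Set.Icc a b)) (t : ℝ) (ht : t ∈ s) : f t = 0 :=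
    Function.notMem_support.mp fun hft => hs.notMem_of_mem_left ht (hf hft)
  have reversed_disjoint : Disjoint (Set.Ioc b a) (Set.Icc a b) :=
    Set.disjoint_left.2 fun t hba hab => (hba.1.trans_le hab.2).false
  rw [intervalIntegral, setIntegral_eq_zero_of_forall_eq_zero (vanishes_off reversed_disjoint),
    sub_zero, ← integral_Icc_eq_integral_Ioc,
    setIntegral_eq_integral_of_forall_compl_eq_zero (vanishes_off disjoint_compl_left)]

theorem intervalIntegral.integral_comp_sub_mul_cexp {h : ℝ → ℂ} {a b c : ℝ}
    (hsupp : Function.support h ⊆ Set.Icc (a - c) (b - c)) (z : ℂ) :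
    ∫ t in a..b, h (t - c) * cexp (z * t) = (∫ t, h t * cexp (z * t)) * cexp (z * c) := by
  have shifted_supp : Function.support (fun t => h (t - c) * cexp (z * t)) ⊆ Set.Icc a b :=
    fun t ht => by
      have hmem := hsupp (left_ne_zero_of_mul ht)
      exact ⟨by linarith [hmem.1], by linarith [hmem.2]⟩
  calc ∫ t in a..b, h (t - c) * cexp (z * t)
      = ∫ t, h (t - c) * cexp (z * ↑(t - c)) * cexp (z * c) := by
        rw [integral_eq_integral_of_support_subset_Icc shifted_supp]
        congr with t
        rw [mul_assoc, ← Complex.exp_add]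
        push_cast
        ring_nf
    _ = (∫ t, h t * cexp (z * t)) * cexp (z * c) := by
        rw [MeasureTheory.integral_mul_const, integral_sub_right_eq_self (fun t => h t * cexp (z * t))]

theorem fourier_coeff_of_aligned_frame_general
    (τ Tp : ℝ)
    (h : ℝ → ℂ) (hint : Integrable h)
    (hsupp : ∀ t : ℝ, t ∉ Set.Icc (0:ℝ) Tp → h t = 0)
    (L : ℕ) (α : Fin L → ℂ) (ν : Fin L → ℝ) (τd : Fin L → ℝ)
    (hτd : ∀ l, τd l ∈ Set.Icc (0:ℝ) (τ - Tp))
    (p : ℕ) (k : ℤ) :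
    ∫ t in (0:ℝ)..τ,
        (∑ l, α l * h (t - τd l) * Complex.exp (-Complex.I * (ν l : ℂ) * (p : ℂ) * (τ : ℂ)))
          * Complex.exp (-2 * (π : ℂ) * Complex.I * (k : ℂ) * (t : ℂ) / (τ : ℂ))
      = (∫ t : ℝ, h t * Complex.exp (-2 * (π : ℂ) * Complex.I * (((k : ℝ) / τ : ℝ) : ℂ) * (t : ℂ)))
        * ∑ l, α l * Complex.exp (-2 * (π : ℂ) * Complex.I * (k : ℂ) * ((τd l : ℝ) : ℂ) / (τ : ℂ))
            * Complex.exp (-Complex.I * (ν l : ℂ) * (p : ℂ) * (τ : ℂ)) := by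
  have kernel (t : ℝ) :
      cexp (-2 * π * I * k * t / τ) = cexp (-2 * π * I * ((k / τ : ℝ) : ℂ) * t) := by
    push_cast
    ring_nf
  simp only [kernel, Finset.sum_mul]
  rw [intervalIntegral.integral_finsetSum fun l _ => ?integrable, Finset.mul_sum]
  case integrable =>
    exact (((hint.comp_sub_right _).intervalIntegrable.const_mul _).mul_const _).mul_continuousOn
      (by fun_prop)
  refine Finset.sum_congr rfl fun l _ => ?_
  have echo_supp : Function.support h ⊆ Set.Icc (0 - τd l) (τ - τd l) :=
    (Function.support_subset_iff'.2 hsupp).trans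
      (Set.Icc_subset_Icc (by linarith [(hτd l).1]) (by linarith [(hτd l).2]))
  calc _ = α l * cexp (-I * ν l * p * τ) *
        ∫ t in (0:ℝ)..τ, h (t - τd l) * cexp (-2 * π * I * ((k / τ : ℝ) : ℂ) * t) := by
        rw [← intervalIntegral.integral_const_mul]
        congr with t
        ring
    _ = _ := by
        rw [intervalIntegral.integral_comp_sub_mul_cexp echo_supp]
        ring

/-- The Fourier series coefficient over `[0, τ]` of one aligned received pulse frame equals the
continuous-time Fourier transform of the pulse at `k/τ` times the sum of delay/Doppler phase
factors. -/
theorem fourier_coeff_of_aligned_frame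
    (τ Tp : ℝ) (hτ : 0 < τ) (hTp : Tp ∈ Set.Icc (0:ℝ) τ)
    (h : ℝ → ℂ) (hint : Integrable h)
    (hsupp : ∀ t : ℝ, t ∉ Set.Icc (0:ℝ) Tp → h t = 0)
    (L : ℕ) (α : Fin L → ℂ) (ν : Fin L → ℝ) (τd : Fin L → ℝ)
    (hτd : ∀ l, τd l ∈ Set.Icc (0:ℝ) (τ - Tp))
    (p : ℕ) (k : ℤ) :
    ∫ t in (0:ℝ)..τ,
        (∑ l, α l * h (t - τd l) * Complex.exp (-Complex.I * (ν l : ℂ) * (p : ℂ) * (τ : ℂ)))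
          * Complex.exp (-2 * (π : ℂ) * Complex.I * (k : ℂ) * (t : ℂ) / (τ : ℂ))
      = (∫ t : ℝ, h t * Complex.exp (-2 * (π : ℂ) * Complex.I * (((k : ℝ) / τ : ℝ) : ℂ) * (t : ℂ)))
        * ∑ l, α l * Complex.exp (-2 * (π : ℂ) * Complex.I * (k : ℂ) * ((τd l : ℝ) : ℂ) / (τ : ℂ))
            * Complex.exp (-Complex.I * (ν l : ℂ) * (p : ℂ) * (τ : ℂ)) :=
  fourier_coeff_of_aligned_frame_general τ Tp h hint hsupp L α ν τd hτd p k
end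

section
/- Let τ > 0, C ∈ ℕ, v_d ∈ ℝ, σ_d ≥ 0, and σ_c > 0. On a probability space, let (α_c, τ_c, v_c) for c = 1, …, C be mutually independent random variables such that: each α_c is complex-valued with E[α_c] = 0 and E[|α_c|²] = σ_c²; each τ_c is uniformly distributed on [0, τ]; and each v_c is Gaussian with mean v_d and variance σ_d². For integers p ≥ 0 and k, define the clutter Fourier coefficients c̃_p[k] = (1/τ) Σ_{c=1}^{C} α_c · exp(−2πi k τ_c / τ) · exp(−i v_c p τ). Then E[c̃_p[k]] = 0 for all p and k, and for all integers k₁, k₂ and all integers l ≥ 0, E[c̃_p[k₁] · conj(c̃_{p+l}[k₂])] = (1/τ²) · C · σ_c² · δ_{k₁,k₂} · exp(i v_d l τ − σ_d² l² τ² / 2), where δ_{k₁,k₂} equals 1 if k₁ = k₂ and 0 otherwise. -/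
/-!
Each coefficient is `(1/τ) ∑_c α_c e_k(τ_c) d_p(v_c)` with unimodular delay and Doppler phases.
Since `α_c` is centred and independent of `(τ_c, v_c)`, every scatterer term has mean zero, and
independence across scatterers kills all cross terms `c ≠ c'` of the second moment. In a diagonal
term the amplitude contributes `E|α_c|² = σ_c²`, the delay phases combine to `e_{k₁-k₂}(τ_c)`, whose
mean over one full period is `δ_{k₁k₂}`, and the Doppler phases combine to `exp (i l τ v_c)`, whose
mean is the characteristic function of the Doppler law at `l τ`; for the Gaussian law this is
`exp (i v_d l τ - σ_d² l² τ² / 2)`.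
-/

open MeasureTheory ProbabilityTheory Complex Real

/-- Value type of the `3C` clutter random variables: the `c`-th amplitude is complex-valued,
the `c`-th delay and the `c`-th Doppler are real-valued. -/
def clutterType (C : ℕ) : Fin C ⊕ Fin C ⊕ Fin C → Type
  | .inl _ => ℂ
  | .inr (.inl _) => ℝ
  | .inr (.inr _) => ℝ

noncomputable instance clutterTypeMeasurableSpace (C : ℕ) (i : Fin C ⊕ Fin C ⊕ Fin C) :
    MeasurableSpace (clutterType C i) := by
  cases i with
  | inl _ => exact (inferInstance : MeasurableSpace ℂ)
  | inr j =>
    cases j with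
    | inl _ => exact (inferInstance : MeasurableSpace ℝ)
    | inr _ => exact (inferInstance : MeasurableSpace ℝ)

/-- The family of all `3C` clutter random variables: amplitudes `α`, delays `τc`, Dopplers `vc`. -/
def clutterVars {Ω : Type*} {C : ℕ} (α : Fin C → Ω → ℂ) (τc vc : Fin C → Ω → ℝ) :
    ∀ i : Fin C ⊕ Fin C ⊕ Fin C, Ω → clutterType C i
  | .inl c => α c
  | .inr (.inl c) => τc c
  | .inr (.inr c) => vc c

/-- The clutter Fourier coefficient `c̃_p[k] = (1/τ) ∑_c α_c e^{-2πik τ_c/τ} e^{-i v_c p τ}`. -/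
noncomputable def clutterCoeff {Ω : Type*} {C : ℕ} (τ : ℝ) (α : Fin C → Ω → ℂ)
    (τc vc : Fin C → Ω → ℝ) (p : ℕ) (k : ℤ) (ω : Ω) : ℂ :=
  (1 / (τ : ℂ)) * ∑ c, α c ω
      * Complex.exp (-2 * (π : ℂ) * Complex.I * (k : ℂ) * ((τc c ω : ℝ) : ℂ) / (τ : ℂ))
      * Complex.exp (-Complex.I * ((vc c ω : ℝ) : ℂ) * (p : ℂ) * (τ : ℂ))

open scoped ENNReal

noncomputable def delayPhase (τ : ℝ) (k : ℤ) (t : ℝ) : ℂ :=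
  Complex.exp (-2 * (π : ℂ) * Complex.I * (k : ℂ) * (t : ℂ) / (τ : ℂ))

noncomputable def dopplerPhase (τ : ℝ) (p : ℕ) (v : ℝ) : ℂ :=
  Complex.exp (-Complex.I * (v : ℂ) * (p : ℂ) * (τ : ℂ))

@[fun_prop]
lemma measurable_delayPhase (τ : ℝ) (k : ℤ) : Measurable (delayPhase τ k) := by
  unfold delayPhase; fun_prop

@[fun_prop]
lemma measurable_dopplerPhase (τ : ℝ) (p : ℕ) : Measurable (dopplerPhase τ p) := by
  unfold dopplerPhase; fun_prop

lemma delayPhase_eq (τ : ℝ) (k : ℤ) (t : ℝ) :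
    delayPhase τ k t = Complex.exp (((-2 * π * k * t / τ : ℝ) : ℂ) * Complex.I) := by
  unfold delayPhase; push_cast; ring_nf

lemma dopplerPhase_eq (τ : ℝ) (p : ℕ) (v : ℝ) :
    dopplerPhase τ p v = Complex.exp (((-(v * p * τ)) : ℝ) * Complex.I) := by
  unfold dopplerPhase; push_cast; ring_nf

lemma norm_delayPhase (τ : ℝ) (k : ℤ) (t : ℝ) : ‖delayPhase τ k t‖ = 1 := by
  rw [delayPhase_eq, Complex.norm_exp_ofReal_mul_I]

lemma norm_dopplerPhase (τ : ℝ) (p : ℕ) (v : ℝ) : ‖dopplerPhase τ p v‖ = 1 := by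
  rw [dopplerPhase_eq, Complex.norm_exp_ofReal_mul_I]

lemma delayPhase_mul_conj (τ : ℝ) (k₁ k₂ : ℤ) (t : ℝ) :
    delayPhase τ k₁ t * starRingEnd ℂ (delayPhase τ k₂ t) = delayPhase τ (k₁ - k₂) t := by
  simp only [delayPhase_eq, ← Complex.exp_conj, ← Complex.exp_add, map_mul, Complex.conj_ofReal,
    Complex.conj_I]
  push_cast; ring_nf

lemma dopplerPhase_mul_conj (τ : ℝ) (p l : ℕ) (v : ℝ) :
    dopplerPhase τ p v * starRingEnd ℂ (dopplerPhase τ (p + l) v)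
      = Complex.exp (((l * τ : ℝ) : ℂ) * v * Complex.I) := by
  simp only [dopplerPhase_eq, ← Complex.exp_conj, ← Complex.exp_add, map_mul, Complex.conj_ofReal,
    Complex.conj_I]
  push_cast; ring_nf

lemma delayPhase_zero (τ t : ℝ) : delayPhase τ 0 t = 1 := by
  simp [delayPhase]

lemma integral_delayPhase_Icc {τ : ℝ} (hτ : 0 < τ) {m : ℤ} (hm : m ≠ 0) :
    ∫ t in Set.Icc 0 τ, delayPhase τ m t = 0 := by
  have hτ' : (τ : ℂ) ≠ 0 := Complex.ofReal_ne_zero.mpr hτ.ne'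
  set c : ℂ := -2 * π * Complex.I * m / τ
  have hc : c ≠ 0 := div_ne_zero (by simp [Complex.I_ne_zero, Real.pi_ne_zero, hm]) hτ'
  have hperiod : Complex.exp (c * τ) = 1 := by
    rw [show c * τ = (-m : ℤ) * (2 * π * Complex.I) by simp only [c]; field_simp; push_cast; ring]
    exact Complex.exp_int_mul_two_pi_mul_I _
  have hphase : ∀ t : ℝ, delayPhase τ m t = Complex.exp (c * t) := fun t => by
    simp only [delayPhase, c]; ring_nf
  simp_rw [hphase]
  rw [integral_Icc_eq_integral_Ioc, ← intervalIntegral.integral_of_le hτ.le,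
    integral_exp_mul_complex hc, hperiod]
  simp

lemma integral_delayPhase_uniform {τ : ℝ} (hτ : 0 < τ) (m : ℤ) :
    ∫ t, delayPhase τ m t ∂((ENNReal.ofReal τ)⁻¹ • volume.restrict (Set.Icc 0 τ))
      = if m = 0 then 1 else 0 := by
  rw [integral_smul_measure, ENNReal.toReal_inv, ENNReal.toReal_ofReal hτ.le]
  split_ifs with hm
  · simp [hm, delayPhase_zero, hτ.le, hτ.ne']
  · simp [integral_delayPhase_Icc hτ hm]

lemma integral_mul_comp_mul_comp {Ω 𝓣 𝓥 𝕜 : Type*} [MeasurableSpace Ω] [MeasurableSpace 𝓣]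
    [MeasurableSpace 𝓥] [RCLike 𝕜] {μ : Measure Ω} {A : Ω → 𝕜} {T : Ω → 𝓣} {V : Ω → 𝓥}
    {f : 𝓣 → 𝕜} {g : 𝓥 → 𝕜} (hA : AEStronglyMeasurable A μ) (hT : Measurable T)
    (hV : Measurable V) (hf : Measurable f) (hg : Measurable g)
    (hATV : A ⟂ᵢ[μ] fun ω => (T ω, V ω)) (hTV : T ⟂ᵢ[μ] V) :
    ∫ ω, A ω * f (T ω) * g (V ω) ∂μ = (∫ ω, A ω ∂μ) * (∫ ω, f (T ω) ∂μ) * ∫ ω, g (V ω) ∂μ := by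
  have hfg : Measurable fun q : 𝓣 × 𝓥 => f q.1 * g q.2 := by fun_prop
  have hA_fg : ∫ ω, A ω * (f (T ω) * g (V ω)) ∂μ
      = (∫ ω, A ω ∂μ) * ∫ ω, f (T ω) * g (V ω) ∂μ :=
    (hATV.comp measurable_id hfg).integral_fun_mul_eq_mul_integral hA
      (hfg.comp (hT.prodMk hV)).aestronglyMeasurable
  have h_fg : ∫ ω, f (T ω) * g (V ω) ∂μ = (∫ ω, f (T ω) ∂μ) * ∫ ω, g (V ω) ∂μ :=
    (hTV.comp hf hg).integral_fun_mul_eq_mul_integral (hf.comp hT).aestronglyMeasurable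
      (hg.comp hV).aestronglyMeasurable
  simp_rw [mul_assoc, hA_fg, h_fg]

section Clutter

variable {Ω : Type*} {C : ℕ} {α : Fin C → Ω → ℂ} {τc vc : Fin C → Ω → ℝ}

noncomputable def clutterTerm (τ : ℝ) (α : Fin C → Ω → ℂ) (τc vc : Fin C → Ω → ℝ) (p : ℕ)
    (k : ℤ) (c : Fin C) (ω : Ω) : ℂ :=
  α c ω * delayPhase τ k (τc c ω) * dopplerPhase τ p (vc c ω)

lemma clutterCoeff_eq_sum (τ : ℝ) (p : ℕ) (k : ℤ) (ω : Ω) :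
    clutterCoeff τ α τc vc p k ω = (1 / (τ : ℂ)) * ∑ c, clutterTerm τ α τc vc p k c ω :=
  rfl

lemma clutterCoeff_mul_conj_eq_sum (τ : ℝ) (p q : ℕ) (k₁ k₂ : ℤ) (ω : Ω) :
    clutterCoeff τ α τc vc p k₁ ω * starRingEnd ℂ (clutterCoeff τ α τc vc q k₂ ω)
      = (1 / (τ : ℂ) ^ 2) * ∑ c, ∑ c',
          clutterTerm τ α τc vc p k₁ c ω * starRingEnd ℂ (clutterTerm τ α τc vc q k₂ c' ω) := by
  rw [clutterCoeff_eq_sum, clutterCoeff_eq_sum, map_mul, map_sum, map_div₀, map_one,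
    Complex.conj_ofReal, mul_mul_mul_comm, Finset.sum_mul_sum, one_div_mul_one_div, sq]

lemma norm_clutterTerm (τ : ℝ) (p : ℕ) (k : ℤ) (c : Fin C) (ω : Ω) :
    ‖clutterTerm τ α τc vc p k c ω‖ = ‖α c ω‖ := by
  rw [clutterTerm, norm_mul, norm_mul, norm_delayPhase, norm_dopplerPhase, mul_one, mul_one]

lemma aestronglyMeasurable_clutterTerm [MeasurableSpace Ω] {μ : Measure Ω} {c : Fin C}
    (hα : AEStronglyMeasurable (α c) μ) (hτc : Measurable (τc c)) (hvc : Measurable (vc c))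
    (τ : ℝ) (p : ℕ) (k : ℤ) :
    AEStronglyMeasurable (clutterTerm τ α τc vc p k c) μ :=
  (hα.mul ((measurable_delayPhase τ k).comp hτc).aestronglyMeasurable).mul
    ((measurable_dopplerPhase τ p).comp hvc).aestronglyMeasurable

lemma memLp_clutterTerm [MeasurableSpace Ω] {μ : Measure Ω} {q : ℝ≥0∞} {c : Fin C}
    (hα : MemLp (α c) q μ) (hτc : Measurable (τc c)) (hvc : Measurable (vc c)) (τ : ℝ) (p : ℕ)
    (k : ℤ) :
    MemLp (clutterTerm τ α τc vc p k c) q μ :=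
  hα.of_le (aestronglyMeasurable_clutterTerm hα.1 hτc hvc τ p k)
    (.of_forall fun ω => (norm_clutterTerm τ p k c ω).le)

lemma measurable_clutterVars [MeasurableSpace Ω] (hα : ∀ c, Measurable (α c))
    (hτc : ∀ c, Measurable (τc c)) (hvc : ∀ c, Measurable (vc c)) :
    ∀ i, Measurable (clutterVars α τc vc i)
  | .inl c => hα c
  | .inr (.inl c) => hτc c
  | .inr (.inr c) => hvc c

section IndependentScatterers

variable [MeasurableSpace Ω] {μ : Measure Ω}
  (hindep : iIndepFun (m := fun i => clutterTypeMeasurableSpace C i) (clutterVars α τc vc) μ)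
  (hαm : ∀ c, Measurable (α c)) (hτcm : ∀ c, Measurable (τc c)) (hvcm : ∀ c, Measurable (vc c))

include hindep hαm hτcm hvcm in
lemma indepFun_amplitude_delay_doppler (c : Fin C) :
    α c ⟂ᵢ[μ] fun ω => (τc c ω, vc c ω) :=
  (hindep.indepFun_prodMk (measurable_clutterVars hαm hτcm hvcm) (.inr (.inl c)) (.inr (.inr c))
    (.inl c) (by simp) (by simp)).symm

include hindep in
lemma indepFun_delay_doppler (c : Fin C) : τc c ⟂ᵢ[μ] vc c :=
  hindep.indepFun (i := .inr (.inl c)) (j := .inr (.inr c)) (by simp)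

include hindep hαm hτcm hvcm in
lemma indepFun_scatterers {c c' : Fin C} (hcc : c ≠ c') :
    (fun ω => (α c ω, τc c ω, vc c ω)) ⟂ᵢ[μ] fun ω => (α c' ω, τc c' ω, vc c' ω) := by
  classical
  let S (x : Fin C) : Finset (Fin C ⊕ Fin C ⊕ Fin C) := {.inl x, .inr (.inl x), .inr (.inr x)}
  have hS : Disjoint (S c) (S c') := by
    simp [S, Finset.disjoint_left, hcc]
  let triple (x : Fin C) (v : ∀ i : S x, clutterType C i) : ℂ × ℝ × ℝ :=
    (v ⟨.inl x, by simp [S]⟩, v ⟨.inr (.inl x), by simp [S]⟩, v ⟨.inr (.inr x), by simp [S]⟩)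
  have htriple (x : Fin C) : Measurable (triple x) := by fun_prop
  exact (hindep.indepFun_finset _ _ hS (measurable_clutterVars hαm hτcm hvcm)).comp
    (htriple c) (htriple c')

variable {c : Fin C} (hαmean : ∫ ω, α c ω ∂μ = 0)

include hindep hαm hτcm hvcm hαmean in
lemma integral_clutterTerm (τ : ℝ) (p : ℕ) (k : ℤ) :
    ∫ ω, clutterTerm τ α τc vc p k c ω ∂μ = 0 := by
  unfold clutterTerm
  rw [integral_mul_comp_mul_comp (hαm c).aestronglyMeasurable (hτcm c) (hvcm c)
    (measurable_delayPhase τ k) (measurable_dopplerPhase τ p)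
    (indepFun_amplitude_delay_doppler hindep hαm hτcm hvcm c) (indepFun_delay_doppler hindep c),
    hαmean, zero_mul, zero_mul]

include hindep hαm hτcm hvcm hαmean in
lemma integral_clutterTerm_mul_conj_of_ne {c' : Fin C} (hcc : c ≠ c') (τ : ℝ) (p q : ℕ)
    (k₁ k₂ : ℤ) :
    ∫ ω, clutterTerm τ α τc vc p k₁ c ω * starRingEnd ℂ (clutterTerm τ α τc vc q k₂ c' ω) ∂μ
      = 0 := by
  let term (n : ℕ) (j : ℤ) (z : ℂ × ℝ × ℝ) : ℂ :=
    z.1 * delayPhase τ j z.2.1 * dopplerPhase τ n z.2.2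
  have hterm (n : ℕ) (j : ℤ) : Measurable (term n j) := by fun_prop
  have hindep' := (indepFun_scatterers hindep hαm hτcm hvcm hcc).comp (hterm p k₁)
    (Complex.continuous_conj.measurable.comp (hterm q k₂))
  have hmeas (x : Fin C) (n : ℕ) (j : ℤ) : AEStronglyMeasurable (clutterTerm τ α τc vc n j x) μ :=
    aestronglyMeasurable_clutterTerm (hαm x).aestronglyMeasurable (hτcm x) (hvcm x) τ n j
  calc _ = (∫ ω, clutterTerm τ α τc vc p k₁ c ω ∂μ)
          * ∫ ω, starRingEnd ℂ (clutterTerm τ α τc vc q k₂ c' ω) ∂μ :=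
        hindep'.integral_fun_mul_eq_mul_integral (hmeas c p k₁) (hmeas c' q k₂).star
    _ = 0 := by rw [integral_clutterTerm hindep hαm hτcm hvcm hαmean, zero_mul]

include hindep hαm hτcm hvcm in
lemma integral_clutterTerm_mul_conj_self {τ : ℝ} (hτ : 0 < τ) (c : Fin C)
    (hτunif : μ.map (τc c) = (ENNReal.ofReal τ)⁻¹ • volume.restrict (Set.Icc 0 τ))
    (p l : ℕ) (k₁ k₂ : ℤ) :
    ∫ ω, clutterTerm τ α τc vc p k₁ c ω * starRingEnd ℂ (clutterTerm τ α τc vc (p + l) k₂ c ω) ∂μ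
      = (∫ ω, ‖α c ω‖ ^ 2 ∂μ : ℝ) * (if k₁ = k₂ then 1 else 0)
          * charFun (μ.map (vc c)) (l * τ) := by
  have hpt (ω : Ω) : clutterTerm τ α τc vc p k₁ c ω
        * starRingEnd ℂ (clutterTerm τ α τc vc (p + l) k₂ c ω)
      = ((‖α c ω‖ ^ 2 : ℝ) : ℂ) * delayPhase τ (k₁ - k₂) (τc c ω)
          * Complex.exp (((l * τ : ℝ) : ℂ) * (vc c ω : ℂ) * Complex.I) := by
    have hamp : α c ω * starRingEnd ℂ (α c ω) = ((‖α c ω‖ ^ 2 : ℝ) : ℂ) := by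
      rw [Complex.mul_conj, Complex.normSq_eq_norm_sq]
    rw [← hamp, ← delayPhase_mul_conj, ← dopplerPhase_mul_conj]
    simp only [clutterTerm, map_mul]
    ring
  have hpower : (fun ω => ((‖α c ω‖ ^ 2 : ℝ) : ℂ)) ⟂ᵢ[μ] fun ω => (τc c ω, vc c ω) :=
    (indepFun_amplitude_delay_doppler hindep hαm hτcm hvcm c).comp
      (Complex.measurable_ofReal.comp (measurable_norm.pow_const 2)) measurable_id
  simp_rw [hpt]
  rw [integral_mul_comp_mul_comp
      (g := fun v : ℝ => Complex.exp (((l * τ : ℝ) : ℂ) * v * Complex.I)) (by fun_prop)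
      (hτcm c) (hvcm c) (measurable_delayPhase τ _) (by fun_prop) hpower
      (indepFun_delay_doppler hindep c),
    integral_complex_ofReal, ← integral_map (hτcm c).aemeasurable (by fun_prop), hτunif,
    integral_delayPhase_uniform hτ, charFun_apply_real,
    integral_map (hvcm c).aemeasurable (by fun_prop)]
  simp only [sub_eq_zero]

include hindep hαm hτcm hvcm in
theorem integral_clutterCoeff (hαint : ∀ c, Integrable (α c) μ)
    (hαmean : ∀ c, ∫ ω, α c ω ∂μ = 0) (τ : ℝ) (p : ℕ) (k : ℤ) :
    ∫ ω, clutterCoeff τ α τc vc p k ω ∂μ = 0 := by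
  have hterm (c : Fin C) : Integrable (clutterTerm τ α τc vc p k c) μ :=
    memLp_one_iff_integrable.1 <|
      memLp_clutterTerm (memLp_one_iff_integrable.2 (hαint c)) (hτcm c) (hvcm c) τ p k
  simp_rw [clutterCoeff_eq_sum]
  rw [integral_const_mul, integral_finsetSum _ fun c _ => hterm c]
  simp [integral_clutterTerm hindep hαm hτcm hvcm (hαmean _)]

include hindep hαm hτcm hvcm in
theorem integral_clutterCoeff_mul_conj {τ σ : ℝ} (hτ : 0 < τ) (hα : ∀ c, MemLp (α c) 2 μ)
    (hαmean : ∀ c, ∫ ω, α c ω ∂μ = 0) (hαvar : ∀ c, ∫ ω, ‖α c ω‖ ^ 2 ∂μ = σ ^ 2)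
    (hτunif : ∀ c, μ.map (τc c) = (ENNReal.ofReal τ)⁻¹ • volume.restrict (Set.Icc 0 τ))
    {ν : Measure ℝ} (hν : ∀ c, μ.map (vc c) = ν) (p l : ℕ) (k₁ k₂ : ℤ) :
    ∫ ω, clutterCoeff τ α τc vc p k₁ ω * starRingEnd ℂ (clutterCoeff τ α τc vc (p + l) k₂ ω) ∂μ
      = (1 / (τ : ℂ) ^ 2) * C * (σ : ℂ) ^ 2 * (if k₁ = k₂ then 1 else 0)
          * charFun ν (l * τ) := by
  have hcross (c c' : Fin C) : Integrable (fun ω => clutterTerm τ α τc vc p k₁ c ω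
      * starRingEnd ℂ (clutterTerm τ α τc vc (p + l) k₂ c' ω)) μ :=
    (memLp_clutterTerm (hα c) (hτcm c) (hvcm c) τ p k₁).integrable_mul
      (memLp_clutterTerm (hα c') (hτcm c') (hvcm c') τ (p + l) k₂).star
  have hrow (c : Fin C) : ∫ ω, ∑ c', clutterTerm τ α τc vc p k₁ c ω
        * starRingEnd ℂ (clutterTerm τ α τc vc (p + l) k₂ c' ω) ∂μ
      = (σ : ℂ) ^ 2 * (if k₁ = k₂ then 1 else 0) * charFun ν (l * τ) := by
    rw [integral_finsetSum _ fun c' _ => hcross c c', Finset.sum_eq_single c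
      (fun c' _ hc' => integral_clutterTerm_mul_conj_of_ne hindep hαm hτcm hvcm (hαmean c)
        hc'.symm _ _ _ _ _) (by simp),
      integral_clutterTerm_mul_conj_self hindep hαm hτcm hvcm hτ c (hτunif c), hαvar, hν]
    push_cast
    rfl
  simp_rw [clutterCoeff_mul_conj_eq_sum]
  rw [integral_const_mul, integral_finsetSum _ fun c _ => integrable_finsetSum _ fun c' _ =>
    hcross c c']
  simp only [hrow, Finset.sum_const, Finset.card_univ, Fintype.card_fin, nsmul_eq_mul]
  ring

end IndependentScatterers

end Clutter

theorem clutter_fourier_coeff_moments_general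
    {Ω : Type*} [MeasureSpace Ω]
    (τ : ℝ) (hτ : 0 < τ) (C : ℕ) (vd σd σc : ℝ)
    (α : Fin C → Ω → ℂ) (τc : Fin C → Ω → ℝ) (vc : Fin C → Ω → ℝ)
    (hαm : ∀ c, Measurable (α c)) (hτcm : ∀ c, Measurable (τc c))
    (hvcm : ∀ c, Measurable (vc c))
    (hindep : iIndepFun (m := fun i => clutterTypeMeasurableSpace C i)
      (clutterVars α τc vc) (ℙ : Measure Ω))
    (hαint : ∀ c, Integrable (α c) (ℙ : Measure Ω))
    (hαsqint : ∀ c, Integrable (fun ω => ‖α c ω‖ ^ 2) (ℙ : Measure Ω))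
    (hαmean : ∀ c, ∫ ω, α c ω = 0)
    (hαvar : ∀ c, ∫ ω, ‖α c ω‖ ^ 2 = σc ^ 2)
    (hτunif : ∀ c, Measure.map (τc c) (ℙ : Measure Ω)
      = (ENNReal.ofReal τ)⁻¹ • (volume.restrict (Set.Icc (0:ℝ) τ)))
    (hvgauss : ∀ c, Measure.map (vc c) (ℙ : Measure Ω)
      = gaussianReal vd (Real.toNNReal (σd ^ 2))) :
    (∀ (p : ℕ) (k : ℤ), ∫ ω, clutterCoeff τ α τc vc p k ω = 0) ∧
    (∀ (p l : ℕ) (k₁ k₂ : ℤ),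
      ∫ ω, clutterCoeff τ α τc vc p k₁ ω
          * (starRingEnd ℂ) (clutterCoeff τ α τc vc (p + l) k₂ ω)
        = (1 / (τ : ℂ) ^ 2) * (C : ℂ) * (σc : ℂ) ^ 2 * (if k₁ = k₂ then 1 else 0)
            * Complex.exp (Complex.I * (vd : ℂ) * (l : ℂ) * (τ : ℂ)
                - (σd : ℂ) ^ 2 * (l : ℂ) ^ 2 * (τ : ℂ) ^ 2 / 2)) := by
  have hαL2 (c : Fin C) : MemLp (α c) 2 :=
    (memLp_two_iff_integrable_sq_norm (hαm c).aestronglyMeasurable).2 (hαsqint c)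
  refine ⟨integral_clutterCoeff hindep hαm hτcm hvcm hαint hαmean τ, fun p l k₁ k₂ => ?_⟩
  rw [integral_clutterCoeff_mul_conj hindep hαm hτcm hvcm hτ hαL2 hαmean hαvar hτunif hvgauss,
    charFun_gaussianReal, Real.coe_toNNReal _ (sq_nonneg σd)]
  push_cast
  ring_nf

/-- First and second moments of the clutter Fourier coefficients: they are zero mean,
uncorrelated across distinct frequency indices, and their slow-time correlation is governed by
the Gaussian characteristic function of the clutter Doppler spectrum. -/
theorem clutter_fourier_coeff_moments
    {Ω : Type*} [MeasureSpace Ω] [IsProbabilityMeasure (ℙ : Measure Ω)]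
    (τ : ℝ) (hτ : 0 < τ) (C : ℕ) (vd σd σc : ℝ) (hσd : 0 ≤ σd) (hσc : 0 < σc)
    (α : Fin C → Ω → ℂ) (τc : Fin C → Ω → ℝ) (vc : Fin C → Ω → ℝ)
    (hαm : ∀ c, Measurable (α c)) (hτcm : ∀ c, Measurable (τc c))
    (hvcm : ∀ c, Measurable (vc c))
    (hindep : iIndepFun (m := fun i => clutterTypeMeasurableSpace C i)
      (clutterVars α τc vc) (ℙ : Measure Ω))
    (hαint : ∀ c, Integrable (α c) (ℙ : Measure Ω))
    (hαsqint : ∀ c, Integrable (fun ω => ‖α c ω‖ ^ 2) (ℙ : Measure Ω))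
    (hαmean : ∀ c, ∫ ω, α c ω = 0)
    (hαvar : ∀ c, ∫ ω, ‖α c ω‖ ^ 2 = σc ^ 2)
    (hτunif : ∀ c, Measure.map (τc c) (ℙ : Measure Ω)
      = (ENNReal.ofReal τ)⁻¹ • (volume.restrict (Set.Icc (0:ℝ) τ)))
    (hvgauss : ∀ c, Measure.map (vc c) (ℙ : Measure Ω)
      = gaussianReal vd (Real.toNNReal (σd ^ 2))) :
    (∀ (p : ℕ) (k : ℤ), ∫ ω, clutterCoeff τ α τc vc p k ω = 0) ∧
    (∀ (p l : ℕ) (k₁ k₂ : ℤ),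
      ∫ ω, clutterCoeff τ α τc vc p k₁ ω
          * (starRingEnd ℂ) (clutterCoeff τ α τc vc (p + l) k₂ ω)
        = (1 / (τ : ℂ) ^ 2) * (C : ℂ) * (σc : ℂ) ^ 2 * (if k₁ = k₂ then 1 else 0)
            * Complex.exp (Complex.I * (vd : ℂ) * (l : ℂ) * (τ : ℂ)
                - (σd : ℂ) ^ 2 * (l : ℂ) ^ 2 * (τ : ℂ) ^ 2 / 2)) :=
  clutter_fourier_coeff_moments_general τ hτ C vd σd σc α τc vc hαm hτcm hvcm hindep hαint hαsqint
    hαmean hαvar hτunif hvgauss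
end

section
/- Let N, K, L be natural numbers with 2L ≤ K ≤ N, and let A be the K × N complex matrix with entries A_{k,n} = exp(−2πi k n / N) for 0 ≤ k ≤ K−1 and 0 ≤ n ≤ N−1 (the first K rows of the N × N DFT matrix). If x, y ∈ ℂ^N each have at most L nonzero entries and A x = A y, then x = y. In other words, any vector with at most L nonzero entries is uniquely determined among all such vectors by its first 2L discrete Fourier coefficients. -/
/-!
The difference `x - y` has at most `2L ≤ K` nonzero entries and its first `K` Fourier
coefficients vanish. The entries of the partial DFT matrix are `(ω ^ n) ^ k` with
`ω = exp (-2πi/N)` a primitive `N`-th root of unity, so the nodes `ω ^ n` are distinct, and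
restricted to the support of `x - y` those equations form an invertible square Vandermonde system.
-/

open Real Matrix Finset

section Vandermonde

variable {R ι : Type*} [CommRing R] [IsDomain R]

theorem eq_zero_of_forall_sum_pow_mul_eq_zero {s : Finset ι} {v c : ι → R} (hv : Set.InjOn v s)
    (hc : ∀ k < #s, ∑ i ∈ s, v i ^ k * c i = 0) : ∀ i ∈ s, c i = 0 := by
  let e := s.equivFin.symm
  have hve : Function.Injective fun j => v (e j) := fun a b h =>
    e.injective (Subtype.ext (hv (e a).2 (e b).2 h))
  have hce : (fun j => c (e j)) = 0 := by
    refine eq_zero_of_forall_pow_sum_mul_pow_eq_zero hve fun k => ?_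
    rw [e.sum_comp fun i : s => c i * v i ^ (k : ℕ),
      sum_coe_sort s fun i => c i * v i ^ (k : ℕ)]
    simpa only [mul_comm] using hc k k.isLt
  intro i hi
  simpa [e] using congrFun hce (s.equivFin ⟨i, hi⟩)

theorem eq_zero_of_card_filter_ne_zero_le_of_forall_sum_pow_mul_eq_zero [Fintype ι]
    [DecidableEq R] {v z : ι → R} (hv : Function.Injective v) {K : ℕ}
    (hz : #{i | z i ≠ 0} ≤ K) (hvz : ∀ k < K, ∑ i, v i ^ k * z i = 0) : z = 0 := by
  have hsupp := eq_zero_of_forall_sum_pow_mul_eq_zero (s := {i | z i ≠ 0}) hv.injOn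
    fun k hk => by
      rw [sum_filter_of_ne fun i _ h => right_ne_zero_of_mul h]
      exact hvz k (hk.trans_le hz)
  funext i
  by_contra hi
  exact hi (hsupp i (by simpa using hi))

end Vandermonde

theorem card_filter_sub_ne_zero_le {ι G : Type*} [Fintype ι] [DecidableEq ι] [AddGroup G]
    [DecidableEq G] (f g : ι → G) :
    #{i | (f - g) i ≠ 0} ≤ #{i | f i ≠ 0} + #{i | g i ≠ 0} := by
  refine (card_le_card fun i => ?_).trans (card_union_le _ _)
  simp only [mem_filter, mem_univ, true_and, mem_union, Pi.sub_apply]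
  contrapose!
  rintro ⟨hf, hg⟩
  rw [hf, hg, sub_self]

theorem injective_pow_exp_neg_two_pi_I_div (N : ℕ) :
    Function.Injective fun n : Fin N => Complex.exp (-2 * π * Complex.I / N) ^ (n : ℕ) := by
  intro a b h
  have hζ : IsPrimitiveRoot (Complex.exp (-2 * π * Complex.I / N)) N := by
    have := (Complex.isPrimitiveRoot_exp N a.pos.ne').inv
    rwa [← Complex.exp_neg, ← neg_div, ← neg_mul, ← neg_mul] at this
  exact Fin.ext (hζ.pow_inj a.isLt b.isLt h)

theorem partial_dft_sparse_uniqueness_general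
    (N K L : ℕ) (hKL : 2 * L ≤ K)
    (A : Matrix (Fin K) (Fin N) ℂ)
    (hA : ∀ (k : Fin K) (n : Fin N),
      A k n = Complex.exp (-2 * (π : ℂ) * Complex.I * ((k : ℕ) : ℂ) * ((n : ℕ) : ℂ) / (N : ℂ)))
    (x y : Fin N → ℂ)
    (hx : (Finset.univ.filter fun n => x n ≠ 0).card ≤ L)
    (hy : (Finset.univ.filter fun n => y n ≠ 0).card ≤ L)
    (hxy : A.mulVec x = A.mulVec y) :
    x = y := by
  set ζ := Complex.exp (-2 * π * Complex.I / N)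
  have hA_pow : ∀ k n, A k n = (ζ ^ (n : ℕ)) ^ (k : ℕ) := fun k n => by
    rw [hA, ← Complex.exp_nat_mul, ← Complex.exp_nat_mul]
    ring_nf
  have hsupp := (card_filter_sub_ne_zero_le x y).trans (Nat.add_le_add hx hy)
  rw [← sub_eq_zero]
  refine eq_zero_of_card_filter_ne_zero_le_of_forall_sum_pow_mul_eq_zero
    (injective_pow_exp_neg_two_pi_I_div N) (hsupp.trans (by omega : L + L ≤ K)) fun k hk => ?_
  have hA_sub : A *ᵥ (x - y) = 0 := by rw [mulVec_sub, hxy, sub_self]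
  simpa only [mulVec, dotProduct, hA_pow, Pi.zero_apply] using congrFun hA_sub ⟨k, hk⟩

/-- An `L`-sparse vector is uniquely determined among `L`-sparse vectors by its first
`K ≥ 2L` discrete Fourier coefficients (consecutive rows of the `N × N` DFT matrix). -/
theorem partial_dft_sparse_uniqueness
    (N K L : ℕ) (hKL : 2 * L ≤ K) (hKN : K ≤ N)
    (A : Matrix (Fin K) (Fin N) ℂ)
    (hA : ∀ (k : Fin K) (n : Fin N),
      A k n = Complex.exp (-2 * (π : ℂ) * Complex.I * ((k : ℕ) : ℂ) * ((n : ℕ) : ℂ) / (N : ℂ)))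
    (x y : Fin N → ℂ)
    (hx : (Finset.univ.filter fun n => x n ≠ 0).card ≤ L)
    (hy : (Finset.univ.filter fun n => y n ≠ 0).card ≤ L)
    (hxy : A.mulVec x = A.mulVec y) :
    x = y :=
  partial_dft_sparse_uniqueness_general N K L hKL A hA x y hx hy hxy
end

section
/- Let τ > 0, P ∈ ℕ, L ∈ ℕ, and for each l < L let α_l ∈ ℂ, ν_l ∈ ℝ, and let H_k ∈ ℂ and phase factors d_l[k] = exp(−2πi k τ_l/τ) be given for each integer k (with τ_l ∈ ℝ). Suppose the slow-time coefficients are c_p[k] = (1/τ) H_k Σ_{l<L} α_l d_l[k] exp(−i ν_l p τ) for 0 ≤ p ≤ P−1. Then for every ν ∈ ℝ and every integer k, the Doppler-focused coefficient satisfies exactly Σ_{p=0}^{P−1} c_p[k] · exp(i ν p τ) = (1/τ) H_k Σ_{l<L} α_l d_l[k] · g((ν − ν_l)τ), where g(θ) = Σ_{p=0}^{P−1} exp(i p θ); moreover, if ν = ν_{l₀} for some target l₀ and |(ν_{l₀} − ν_l)τ mod 2π| ∈ (0, π] for all l ≠ l₀, then |Σ_{p=0}^{P−1} c_p[k] exp(i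 ν_{l₀} p τ) − (P/τ) H_k α_{l₀} d_{l₀}[k]| ≤ (1/τ)|H_k| Σ_{l ≠ l₀} |α_l| · π / |(ν_{l₀} − ν_l)τ mod' 2π|, where mod' denotes the representative in (−π, π]. -/
open Real Finset

/-! The slow-time sum of each target's phase ramp is the Dirichlet sum `∑_{p<P} e^{ipθ}` at its
Doppler offset `θ = (ν - ν_l)τ`, which equals `P` at `θ = 0`. It is a geometric sum, so its norm is
at most `2 / |e^{iθ} - 1| = 1 / |sin (θ/2)|`, and Jordan's inequality `|sin x| ≥ 2|x|/π` on
`|x| ≤ π/2` turns this into `π/|θ|` once `θ` is reduced into `(-π, π]` by `2π`-periodicity. -/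

noncomputable def dirichletSum (P : ℕ) (θ : ℝ) : ℂ :=
  ∑ p ∈ range P, Complex.exp (Complex.I * (p : ℂ) * (θ : ℂ))

lemma dirichletSum_zero (P : ℕ) : dirichletSum P 0 = P := by
  simp [dirichletSum]

lemma dirichletSum_eq_geom_sum (P : ℕ) (θ : ℝ) :
    dirichletSum P θ = ∑ p ∈ range P, Complex.exp (Complex.I * θ) ^ p := by
  refine sum_congr rfl fun p _ => ?_
  rw [← Complex.exp_nat_mul]
  ring_nf

lemma dirichletSum_periodic (P : ℕ) : Function.Periodic (dirichletSum P) (2 * π) := by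
  intro θ
  rw [dirichletSum_eq_geom_sum, dirichletSum_eq_geom_sum, show Complex.I * ((θ + 2 * π : ℝ) : ℂ) = Complex.I * θ + 2 * π * Complex.I by push_cast; ring,
    Complex.exp_periodic]

lemma dirichletSum_toIocMod (P : ℕ) (θ : ℝ) :
    dirichletSum P (toIocMod two_pi_pos (-π) θ) = dirichletSum P θ := by
  rw [← self_sub_toIocDiv_zsmul]
  exact (dirichletSum_periodic P).sub_zsmul_eq _

lemma norm_dirichletSum_le_of_abs_le_pi (P : ℕ) {θ : ℝ} (h₀ : θ ≠ 0) (hπ : |θ| ≤ π) :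
    ‖dirichletSum P θ‖ ≤ π / |θ| := by
  set z := Complex.exp (Complex.I * θ)
  have hz : ‖z‖ = 1 := by simp only [z, mul_comm Complex.I, Complex.norm_exp_ofReal_mul_I]
  have hjordan : 2 * (|θ| / π) ≤ ‖z - 1‖ := by
    have := mul_abs_le_abs_sin (x := θ / 2) (by rw [abs_div, abs_two]; linarith)
    rw [abs_div, abs_two] at this
    rw [Complex.norm_exp_I_mul_ofReal_sub_one, norm_mul, Real.norm_eq_abs, Real.norm_eq_abs,
      abs_two]
    linarith [show 2 / π * (|θ| / 2) = |θ| / π by ring]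
  have hθ : 0 < 2 * (|θ| / π) := by positivity
  have hz1 : z ≠ 1 := fun h ↦ by rw [h, sub_self, norm_zero] at hjordan; linarith
  have hnum : ‖z ^ P - 1‖ ≤ 2 := by
    calc ‖z ^ P - 1‖ ≤ ‖z ^ P‖ + ‖(1 : ℂ)‖ := norm_sub_le _ _
      _ = 2 := by rw [norm_pow, hz, one_pow, norm_one]; norm_num
  calc ‖dirichletSum P θ‖ = ‖z ^ P - 1‖ / ‖z - 1‖ := by
        rw [dirichletSum_eq_geom_sum, geom_sum_eq hz1, norm_div]
    _ ≤ 2 / (2 * (|θ| / π)) := by gcongr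
    _ = π / |θ| := by field_simp

lemma norm_dirichletSum_le (P : ℕ) {θ : ℝ} (h : toIocMod two_pi_pos (-π) θ ≠ 0) :
    ‖dirichletSum P θ‖ ≤ π / |toIocMod two_pi_pos (-π) θ| := by
  obtain ⟨hlo, hhi⟩ := toIocMod_mem_Ioc two_pi_pos (-π) θ
  rw [← dirichletSum_toIocMod]
  exact norm_dirichletSum_le_of_abs_le_pi P h (abs_le.mpr ⟨hlo.le, by linarith⟩)

lemma sum_sum_mul_exp_eq_sum_mul_dirichletSum {ι : Type*} (s : Finset ι) (a : ι → ℂ)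
    (ν : ι → ℝ) (ν' τ : ℝ) (P : ℕ) :
    ∑ p ∈ range P, (∑ l ∈ s, a l * Complex.exp (-Complex.I * (ν l : ℂ) * (p : ℂ) * (τ : ℂ)))
        * Complex.exp (Complex.I * (ν' : ℂ) * (p : ℂ) * (τ : ℂ))
      = ∑ l ∈ s, a l * dirichletSum P ((ν' - ν l) * τ) := by
  simp_rw [dirichletSum, sum_mul, mul_sum]
  rw [sum_comm]
  refine sum_congr rfl fun l _ ↦ sum_congr rfl fun p _ ↦ ?_
  rw [mul_assoc, ← Complex.exp_add]
  push_cast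
  ring_nf

lemma norm_sum_mul_dirichletSum_sub_le {ι : Type*} [DecidableEq ι] {s : Finset ι} {l₀ : ι}
    (hl₀ : l₀ ∈ s) (a : ι → ℂ) {θ : ι → ℝ} (hθ₀ : θ l₀ = 0)
    (hθ : ∀ l ∈ s.erase l₀, toIocMod two_pi_pos (-π) (θ l) ≠ 0) (P : ℕ) :
    ‖∑ l ∈ s, a l * dirichletSum P (θ l) - P * a l₀‖
      ≤ ∑ l ∈ s.erase l₀, ‖a l‖ * π / |toIocMod two_pi_pos (-π) (θ l)| := by
  rw [← add_sum_erase s _ hl₀, hθ₀, dirichletSum_zero, mul_comm (a l₀), add_sub_cancel_left]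
  refine (norm_sum_le _ _).trans (sum_le_sum fun l hl ↦ ?_)
  rw [norm_mul, mul_div_assoc]
  exact mul_le_mul_of_nonneg_left (norm_dirichletSum_le P (hθ l hl)) (norm_nonneg _)

lemma norm_exp_neg_two_pi_I_mul_div (k : ℤ) (t τ : ℝ) :
    ‖Complex.exp (-2 * (π : ℂ) * Complex.I * (k : ℂ) * (t : ℂ) / (τ : ℂ))‖ = 1 := by
  rw [show -2 * (π : ℂ) * Complex.I * k * t / τ = ((-2 * π * k * t / τ : ℝ) : ℂ) * Complex.I by
    push_cast; ring]
  exact Complex.norm_exp_ofReal_mul_I _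

/-- Doppler focusing: exact identity for the slow-time DFT of the per-pulse Fourier
coefficients, and the Dirichlet-kernel bound on the residual interference of off-resonance
targets when focusing at the Doppler frequency of target `l₀`. -/
theorem doppler_focusing_identity_and_bound
    (τ : ℝ) (hτ : 0 < τ) (P L : ℕ)
    (α : Fin L → ℂ) (ν : Fin L → ℝ) (τd : Fin L → ℝ)
    (H : ℤ → ℂ) (d : Fin L → ℤ → ℂ)
    (hd : ∀ (l : Fin L) (k : ℤ),
      d l k = Complex.exp (-2 * (π : ℂ) * Complex.I * (k : ℂ) * ((τd l : ℝ) : ℂ) / (τ : ℂ)))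
    (c : ℕ → ℤ → ℂ)
    (hc : ∀ (p : ℕ), p < P → ∀ k : ℤ,
      c p k = (1 / (τ : ℂ)) * H k * ∑ l, α l * d l k
          * Complex.exp (-Complex.I * (ν l : ℂ) * (p : ℂ) * (τ : ℂ))) :
    (∀ (ν' : ℝ) (k : ℤ),
      ∑ p ∈ Finset.range P, c p k * Complex.exp (Complex.I * (ν' : ℂ) * (p : ℂ) * (τ : ℂ))
        = (1 / (τ : ℂ)) * H k * ∑ l, α l * d l k
            * ∑ p ∈ Finset.range P,
                Complex.exp (Complex.I * (p : ℂ) * (((ν' - ν l) * τ : ℝ) : ℂ))) ∧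
    (∀ (l₀ : Fin L) (k : ℤ),
      (∀ l : Fin L, l ≠ l₀ →
        |toIocMod Real.two_pi_pos (-π) ((ν l₀ - ν l) * τ)| ∈ Set.Ioc (0 : ℝ) π) →
      ‖
          ((∑ p ∈ Finset.range P,
              c p k * Complex.exp (Complex.I * ((ν l₀ : ℝ) : ℂ) * (p : ℂ) * (τ : ℂ)))
            - ((P : ℂ) / (τ : ℂ)) * H k * α l₀ * d l₀ k)‖
        ≤ (1 / τ) * ‖H k‖
            * ∑ l ∈ Finset.univ.erase l₀,
                ‖α l‖ * π / |toIocMod Real.two_pi_pos (-π) ((ν l₀ - ν l) * τ)|) := by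
  have focus : ∀ (ν' : ℝ) (k : ℤ),
      ∑ p ∈ range P, c p k * Complex.exp (Complex.I * (ν' : ℂ) * (p : ℂ) * (τ : ℂ))
        = (1 / (τ : ℂ)) * H k * ∑ l, α l * d l k * dirichletSum P ((ν' - ν l) * τ) := by
    intro ν' k
    rw [← sum_sum_mul_exp_eq_sum_mul_dirichletSum, mul_sum]
    exact sum_congr rfl fun p hp ↦ by rw [hc p (mem_range.mp hp) k, mul_assoc]
  refine ⟨focus, fun l₀ k hsep ↦ ?_⟩
  have hnorm_d : ∀ l, ‖d l k‖ = 1 := fun l ↦ by rw [hd]; exact norm_exp_neg_two_pi_I_mul_div k _ τ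
  have hinterf := norm_sum_mul_dirichletSum_sub_le (mem_univ l₀) (fun l ↦ α l * d l k)
    (θ := fun l ↦ (ν l₀ - ν l) * τ) (by simp)
    (fun l hl ↦ abs_pos.mp (hsep l (ne_of_mem_erase hl)).1) P
  simp only [norm_mul, hnorm_d, mul_one] at hinterf
  rw [focus, show ∀ S : ℂ, 1 / (τ : ℂ) * H k * S - P / τ * H k * α l₀ * d l₀ k
      = 1 / τ * H k * (S - P * (α l₀ * d l₀ k)) from fun S ↦ by ring,
    norm_mul, norm_mul, norm_div, norm_one, Complex.norm_real, Real.norm_of_nonneg hτ.le]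
  gcongr
end
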